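/- arXiv:2501.03663 — 5 statements merged into one kernel-verified Lean document; each statement's English description precedes it below -/
import Mathlib

section
/- (Feasibility of upper bounds) Let P be a finite point set, O a set of centers with Σ_{p∈P} d_r(p, O) ≤ G, and let p₀ ∈ P. Suppose α > r is such that |ball(p₀, α)| ≥ G/α, where ball(p₀, α) = {p ∈ P : d(p, p₀) ≤ α}. Then d(p₀, O) ≤ 3α. -/
/-! If `p₀` were farther than `3α` from `O`, every point of `ball(p₀, α)` would be farther than
`2α` from `O`, so its `r`-truncated cost would exceed `α > r`. With at least `G / α` such points
(and `G > 0`, so the ball is nonempty), their total cost alone would exceed `G`. -/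

open Finset

theorem Finset.inf'_dist_le_inf'_dist_add_dist {M : Type*} [PseudoMetricSpace M] {O : Finset M}
    (hO : O.Nonempty) (p q : M) :
    O.inf' hO (fun o => dist p o) ≤ O.inf' hO (fun o => dist q o) + dist p q := by
  rw [← sub_le_iff_le_add]
  refine le_inf' hO _ fun o ho => ?_
  have := inf'_le (fun o => dist p o) ho
  linarith [dist_triangle p q o]

theorem Finset.card_mul_lt_sum {ι K : Type*} [Field K] [LinearOrder K] [IsStrictOrderedRing K]
    {s : Finset ι} (hs : s.Nonempty) {f : ι → K} {a : K} (h : ∀ i ∈ s, a < f i) :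
    #s * a < ∑ i ∈ s, f i := by
  simpa using sum_lt_sum_of_nonempty hs h

theorem stmt_5_general {M : Type*} [MetricSpace M] (P : Finset M) (O : Finset M) (hO : O.Nonempty)
    (r G α : ℝ) (hr : 0 ≤ r) (hG : 0 < G) (p₀ : M)
    (hcost : ∑ p ∈ P, max (O.inf' hO (fun o => dist p o) - r) 0 ≤ G)
    (hα : r < α)
    (hball : (G / α : ℝ) ≤ (P.filter (fun p => dist p p₀ ≤ α)).card) :
    O.inf' hO (fun o => dist p₀ o) ≤ 3 * α := by
  by_contra! hfar
  have hα₀ : 0 < α := hr.trans_lt hα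
  set B := P.filter (fun p => dist p p₀ ≤ α)
  have hB : B.Nonempty := card_pos.1 (by exact_mod_cast (div_pos hG hα₀).trans_le hball)
  have hcostB : ∀ p ∈ B, α < max (O.inf' hO (fun o => dist p o) - r) 0 := by
    intro p hp
    have := inf'_dist_le_inf'_dist_add_dist hO p₀ p
    rw [dist_comm] at this
    exact lt_max_of_lt_left (by linarith [(mem_filter.1 hp).2])
  refine lt_irrefl G ?_
  calc G ≤ #B * α := (div_le_iff₀ hα₀).1 hball
    _ < ∑ p ∈ B, max (O.inf' hO (fun o => dist p o) - r) 0 := card_mul_lt_sum hB hcostB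
    _ ≤ ∑ p ∈ P, max (O.inf' hO (fun o => dist p o) - r) 0 :=
      sum_le_sum_of_subset_of_nonneg (filter_subset _ _) fun _ _ _ => le_max_right _ _
    _ ≤ G := hcost

theorem stmt_5 {M : Type*} [MetricSpace M] (P : Finset M) (O : Finset M) (hO : O.Nonempty)
    (r G α : ℝ) (hr : 0 ≤ r) (hG : 0 < G) (p₀ : M) (hp₀ : p₀ ∈ P)
    (hcost : ∑ p ∈ P, max (O.inf' hO (fun o => dist p o) - r) 0 ≤ G)
    (hα : r < α)
    (hball : (G / α : ℝ) ≤ (P.filter (fun p => dist p p₀ ≤ α)).card) :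
    O.inf' hO (fun o => dist p₀ o) ≤ 3 * α :=
  stmt_5_general P O hO r G α hr hG p₀ hcost hα hball
end

section
/- (Witness contribution lower bound) Let P be a finite point set, O and X sets of centers, r ≥ 0, ε ∈ (0,1), r' = (1+ε/3)r, and G ≥ Σ_{p∈P} d_r(p, O). Let W = {p ∈ P : d_{r'}(p, X) > (1+ε/3)·d_r(p, O)} be the set of ε/3-witnesses. If Σ_{p∈P} d_{r'}(p, X) > (1+ε)(1+ε/3)·Σ_{p∈P} d_r(p, O), then Σ_{p∈W} d_{r'}(p, X) ≥ (ε/10)·Σ_{p∈P} d_{r'}(p, X). -/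
/-! Each non-witness `p` has `d_{r'}(p, X) ≤ (1 + ε/3) d_r(p, O)`, so the non-witnesses contribute
at most `(1 + ε/3) Σ_P d_r(p, O) < C_P / (1 + ε)`; the witnesses therefore carry at least
`ε / (1 + ε) ≥ ε / 10` of `C_P`. -/

open Finset

namespace Finset

variable {ι : Type*}

theorem sum_filter_not_lt_le (s : Finset ι) {f g : ι → ℝ} (hg : ∀ i ∈ s, 0 ≤ g i) :
    ∑ i ∈ s with ¬ g i < f i, f i ≤ ∑ i ∈ s, g i :=
  calc ∑ i ∈ s with ¬ g i < f i, f i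
      ≤ ∑ i ∈ s with ¬ g i < f i, g i := sum_le_sum fun _ hi => not_lt.1 (mem_filter.1 hi).2
    _ ≤ ∑ i ∈ s, g i := sum_le_sum_of_subset_of_nonneg (filter_subset _ _) fun i hi _ => hg i hi

theorem mul_sum_le_one_add_mul_sum_filter_lt (s : Finset ι) {f g : ι → ℝ} {c ε : ℝ}
    (hg : ∀ i ∈ s, 0 ≤ g i) (hc : 0 ≤ c) (hε : -1 ≤ ε)
    (h : (1 + ε) * c * ∑ i ∈ s, g i ≤ ∑ i ∈ s, f i) :
    ε * ∑ i ∈ s, f i ≤ (1 + ε) * ∑ i ∈ s with c * g i < f i, f i := by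
  have hsplit := sum_filter_add_sum_filter_not s (fun i => c * g i < f i) f
  have hrest : ∑ i ∈ s with ¬ c * g i < f i, f i ≤ c * ∑ i ∈ s, g i := by
    rw [mul_sum]
    exact sum_filter_not_lt_le s fun i hi => mul_nonneg hc (hg i hi)
  nlinarith [mul_le_mul_of_nonneg_left hrest (by linarith : (0 : ℝ) ≤ 1 + ε)]

end Finset

theorem stmt_6_general {M : Type*} [MetricSpace M] (P : Finset M) (X O : Finset M)
    (hX : X.Nonempty) (hO : O.Nonempty) (r ε : ℝ) (hε : ε ∈ Set.Ioo (0:ℝ) 1)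
    (hbig : ∑ p ∈ P, max (X.inf' hX (fun x => dist p x) - (1 + ε/3) * r) 0
        > (1 + ε) * (1 + ε/3) * ∑ p ∈ P, max (O.inf' hO (fun o => dist p o) - r) 0) :
    ∑ p ∈ P.filter (fun p =>
        max (X.inf' hX (fun x => dist p x) - (1 + ε/3) * r) 0
          > (1 + ε/3) * max (O.inf' hO (fun o => dist p o) - r) 0),
      max (X.inf' hX (fun x => dist p x) - (1 + ε/3) * r) 0
      ≥ (ε / 10) * ∑ p ∈ P, max (X.inf' hX (fun x => dist p x) - (1 + ε/3) * r) 0 := by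
  obtain ⟨hε0, hε1⟩ := hε
  have hwitness := mul_sum_le_one_add_mul_sum_filter_lt P (c := 1 + ε/3)
    (fun p _ => le_max_right _ 0) (by positivity) (by linarith) hbig.le
  have hnonneg : 0 ≤ ∑ p ∈ P.filter (fun p =>
      max (X.inf' hX (fun x => dist p x) - (1 + ε/3) * r) 0
        > (1 + ε/3) * max (O.inf' hO (fun o => dist p o) - r) 0),
      max (X.inf' hX (fun x => dist p x) - (1 + ε/3) * r) 0 :=
    sum_nonneg fun p _ => le_max_right _ 0
  nlinarith

theorem stmt_6 {M : Type*} [MetricSpace M] (P : Finset M) (X O : Finset M)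
    (hX : X.Nonempty) (hO : O.Nonempty) (r ε : ℝ) (hr : 0 ≤ r) (hε : ε ∈ Set.Ioo (0:ℝ) 1)
    (hbig : ∑ p ∈ P, max (X.inf' hX (fun x => dist p x) - (1 + ε/3) * r) 0
        > (1 + ε) * (1 + ε/3) * ∑ p ∈ P, max (O.inf' hO (fun o => dist p o) - r) 0) :
    ∑ p ∈ P.filter (fun p =>
        max (X.inf' hX (fun x => dist p x) - (1 + ε/3) * r) 0
          > (1 + ε/3) * max (O.inf' hO (fun o => dist p o) - r) 0),
      max (X.inf' hX (fun x => dist p x) - (1 + ε/3) * r) 0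
      ≥ (ε / 10) * ∑ p ∈ P, max (X.inf' hX (fun x => dist p x) - (1 + ε/3) * r) 0 :=
  stmt_6_general P X O hX hO r ε hε hbig
end

section
/- Let p be a point, X a set of centers, o a center, r ≥ 0, ε ∈ (0,1), r' = (1+ε/3)r. Suppose d(p, o) ≥ r and d_{r'}(p, X) > (1+ε/3)·d_r(p, o), where d_r(p, o) = d(p, o) − r. Then d(p, o) < d(p, X)/(1+ε/3), and in particular d(p, o) < d(p, X)/(1+ε/12). -/
theorem stmt_8 {M : Type*} [MetricSpace M] (p o : M) (X : Finset M) (hX : X.Nonempty)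
    (r ε : ℝ) (hr : 0 ≤ r) (hε : ε ∈ Set.Ioo (0:ℝ) 1)
    (ho : r ≤ dist p o)
    (hwit : max (X.inf' hX (fun x => dist p x) - (1 + ε/3) * r) 0
        > (1 + ε/3) * (dist p o - r)) :
    dist p o < X.inf' hX (fun x => dist p x) / (1 + ε/3)
      ∧ dist p o < X.inf' hX (fun x => dist p x) / (1 + ε/12) := by
  obtain ⟨hε0, hε1⟩ := hε
  set D := X.inf' hX (fun x => dist p x) with hD
  have hD0 : 0 ≤ D := Finset.le_inf' hX _ (fun x _ => dist_nonneg)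
  have hrhs : 0 ≤ (1 + ε/3) * (dist p o - r) := by nlinarith
  have hkey : D - (1 + ε/3) * r > (1 + ε/3) * (dist p o - r) := by
    rcases max_cases (D - (1 + ε/3) * r) 0 with ⟨h, _⟩ | ⟨h, _⟩
    · rwa [h] at hwit
    · rw [h] at hwit; linarith
  have hDgt : (1 + ε/3) * dist p o < D := by nlinarith
  constructor
  · rw [lt_div_iff₀ (by linarith)]; linarith [mul_comm (dist p o) (1 + ε/3)]
  · rw [lt_div_iff₀ (by linarith)]; nlinarith [dist_nonneg (x := p) (y := o)]
end

section
/- (Case split for faraway witness) Let p be a point, X a set of centers, o a center, r ≥ 0, ε ∈ (0,1), r' = (1+ε/3)r. Suppose d(p, X) ≥ 8r/ε and d_{r'}(p, X) > (1+ε/3)·d_r(p, o). Then d(p, o) < d(p, X)/(1+ε/12). -/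
theorem stmt_10 {M : Type*} [MetricSpace M] (p o : M) (X : Finset M) (hX : X.Nonempty)
    (r ε : ℝ) (hr : 0 ≤ r) (hε : ε ∈ Set.Ioo (0:ℝ) 1)
    (hfar : 8 * r / ε ≤ X.inf' hX (fun x => dist p x))
    (hwit : max (X.inf' hX (fun x => dist p x) - (1 + ε/3) * r) 0
        > (1 + ε/3) * max (dist p o - r) 0) :
    dist p o < X.inf' hX (fun x => dist p x) / (1 + ε/12) := by
  obtain ⟨hε0, hε1⟩ := hε
  set D := X.inf' hX (fun x => dist p x) with hD
  have h0 : (0:ℝ) ≤ (1 + ε/3) * max (dist p o - r) 0 := by positivity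
  have h1 : (0:ℝ) < max (D - (1 + ε/3) * r) 0 := lt_of_le_of_lt h0 hwit
  have h2 : max (D - (1 + ε/3) * r) 0 = D - (1 + ε/3) * r := by
    rcases max_cases (D - (1 + ε/3) * r) 0 with ⟨h, _⟩ | ⟨h, _⟩
    · exact h
    · linarith [h1.trans_eq h]
  rw [h2] at hwit
  have h3 : (1 + ε/3) * (dist p o - r) ≤ (1 + ε/3) * max (dist p o - r) 0 := by
    apply mul_le_mul_of_nonneg_left (le_max_left _ _) (by linarith)
  have h4 : (1 + ε/3) * dist p o < D := by nlinarith
  have hd : 0 ≤ dist p o := dist_nonneg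
  rw [lt_div_iff₀ (by linarith)]
  nlinarith
end

section
/- (Coreset from bicriteria solution, Lemma 5.2) Let P be a finite point set, r ≥ 0, OPT ≥ 0, and A a set with cost_{6r}(P, A) ≤ 18·OPT. Suppose T is a set containing A such that every p ∈ P with d(p, A) ≤ 12r satisfies d(p, T) ≤ r. Then cost_r(P, T) ≤ 36·OPT, where cost_α(P, S) := Σ_{p∈P} max{d(p, S) − α, 0}. -/
/-! On points far from `A` the slack `6r` of the bicriteria cost absorbs the shift `r` up to a factor
of two, because `d(p, T) ≤ d(p, A)`; points near `A` are covered by `T` and cost nothing at scale `r`. -/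

lemma max_sub_le_two_mul_max_sub {a b r : ℝ} (hb : 0 ≤ b) (hab : a ≤ b)
    (hcover : b ≤ 12 * r → a ≤ r) :
    max (a - r) 0 ≤ 2 * max (b - 6 * r) 0 := by
  by_cases hnear : b ≤ 12 * r
  · have hnonneg : 0 ≤ 2 * max (b - 6 * r) 0 := by positivity
    exact max_le (by linarith [hcover hnear]) hnonneg
  · calc max (a - r) 0 ≤ 2 * (b - 6 * r) := max_le (by linarith) (by linarith)
      _ ≤ 2 * max (b - 6 * r) 0 := by gcongr; exact le_max_left _ _

theorem stmt_18_general {M : Type*} [MetricSpace M] (P A T : Finset M)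
    (hA : A.Nonempty) (hT : T.Nonempty) (hAT : A ⊆ T)
    (r OPT : ℝ)
    (hcostA : ∑ p ∈ P, max (A.inf' hA (fun a => dist p a) - 6 * r) 0 ≤ 18 * OPT)
    (hcover : ∀ p ∈ P, A.inf' hA (fun a => dist p a) ≤ 12 * r →
        T.inf' hT (fun t => dist p t) ≤ r) :
    ∑ p ∈ P, max (T.inf' hT (fun t => dist p t) - r) 0 ≤ 36 * OPT := by
  have hpoint : ∀ p ∈ P, max (T.inf' hT (fun t => dist p t) - r) 0 ≤
      2 * max (A.inf' hA (fun a => dist p a) - 6 * r) 0 := fun p hp =>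
    max_sub_le_two_mul_max_sub (Finset.le_inf' hA _ fun _ _ => dist_nonneg)
      (Finset.inf'_mono _ hAT hA) (hcover p hp)
  calc ∑ p ∈ P, max (T.inf' hT (fun t => dist p t) - r) 0
      ≤ ∑ p ∈ P, 2 * max (A.inf' hA (fun a => dist p a) - 6 * r) 0 := Finset.sum_le_sum hpoint
    _ = 2 * ∑ p ∈ P, max (A.inf' hA (fun a => dist p a) - 6 * r) 0 := (Finset.mul_sum ..).symm
    _ ≤ 36 * OPT := by linarith

theorem stmt_18 {M : Type*} [MetricSpace M] (P A T : Finset M)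
    (hA : A.Nonempty) (hT : T.Nonempty) (hAT : A ⊆ T)
    (r OPT : ℝ) (hr : 0 ≤ r) (hOPT : 0 ≤ OPT)
    (hcostA : ∑ p ∈ P, max (A.inf' hA (fun a => dist p a) - 6 * r) 0 ≤ 18 * OPT)
    (hcover : ∀ p ∈ P, A.inf' hA (fun a => dist p a) ≤ 12 * r →
        T.inf' hT (fun t => dist p t) ≤ r) :
    ∑ p ∈ P, max (T.inf' hT (fun t => dist p t) - r) 0 ≤ 36 * OPT :=
  stmt_18_general P A T hA hT hAT r OPT hcostA hcover
end
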